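/- arXiv:1906.10558 — 2 statements merged into one kernel-verified Lean document; each statement's English description precedes it below -/
import Mathlib

section
/- Let f : [a,b] → ℝ be continuous and of bounded variation, and let (P_n) be a sequence of partitions of [a,b] whose mesh sizes |P_n| tend to 0 as n → ∞. Then V_{P_n}(f) → V_a^b(f) as n → ∞. -/
/-!
A partition sum never exceeds the variation, so only the lower bound needs an argument. Fix a
partition `u` whose sum is close to `V_a^b(f)`. Once the mesh of `P_n` is small, every point of
`u` can be moved down to a nearby point of `P_n` in a monotone way; by uniform continuity this
changes the sum over `u` by at most `2 m η`, and the sum over the moved points is at most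
`V_{P_n}(f)` by the triangle inequality, since they form a coarsening of `P_n`.
-/

open Set Filter

section SumDist

variable {E : Type*} [PseudoMetricSpace E]

lemma sum_range_edist_eq_ofReal_sum_dist (g : ℕ → E) (n : ℕ) :
    ∑ i ∈ Finset.range n, edist (g (i + 1)) (g i)
      = ENNReal.ofReal (∑ i ∈ Finset.range n, dist (g (i + 1)) (g i)) := by
  rw [ENNReal.ofReal_sum_of_nonneg fun i _ => dist_nonneg]
  simp only [edist_dist]

lemma sum_range_dist_comp_le_sum_Ico {κ : ℕ → ℕ} (hκ : Monotone κ) (g : ℕ → E) (m : ℕ) :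
    ∑ j ∈ Finset.range m, dist (g (κ (j + 1))) (g (κ j))
      ≤ ∑ i ∈ Finset.Ico (κ 0) (κ m), dist (g (i + 1)) (g i) := by
  induction m with
  | zero => simp
  | succ m ih =>
    rw [Finset.sum_range_succ, ← Finset.sum_Ico_consecutive _ (hκ m.zero_le) (hκ m.le_succ)]
    gcongr
    simpa only [dist_comm] using dist_le_Ico_sum_dist g (hκ m.le_succ)

lemma sum_range_dist_le_sum_range_dist_add {x y : ℕ → E} {m : ℕ} {η : ℝ}
    (h : ∀ j ≤ m, dist (x j) (y j) ≤ η) :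
    ∑ j ∈ Finset.range m, dist (x (j + 1)) (x j)
      ≤ ∑ j ∈ Finset.range m, dist (y (j + 1)) (y j) + 2 * m * η := by
  have step : ∀ j < m, dist (x (j + 1)) (x j) ≤ dist (y (j + 1)) (y j) + 2 * η := fun j hj =>
    calc dist (x (j + 1)) (x j)
        ≤ dist (x (j + 1)) (y (j + 1)) + dist (y (j + 1)) (y j) + dist (y j) (x j) :=
          dist_triangle4 _ _ _ _
      _ ≤ dist (y (j + 1)) (y j) + 2 * η := by
          rw [dist_comm (y j)]
          linarith [h (j + 1) hj, h j hj.le]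
  calc ∑ j ∈ Finset.range m, dist (x (j + 1)) (x j)
      ≤ ∑ j ∈ Finset.range m, (dist (y (j + 1)) (y j) + 2 * η) :=
        Finset.sum_le_sum fun j hj => step j (Finset.mem_range.1 hj)
    _ = ∑ j ∈ Finset.range m, dist (y (j + 1)) (y j) + 2 * m * η := by
        rw [Finset.sum_add_distrib, Finset.sum_const, Finset.card_range, nsmul_eq_mul]
        ring

end SumDist

lemma MonotoneOn.mem_Icc_of_le {α : Type*} [Preorder α] {t : ℕ → α} {N : ℕ}
    (ht : MonotoneOn t (Iic N)) {i : ℕ} (hi : i ≤ N) : t i ∈ Icc (t 0) (t N) :=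
  ⟨ht (mem_Iic.2 (Nat.zero_le N)) hi (Nat.zero_le i), ht hi self_mem_Iic hi⟩

section Variation

variable {α E : Type*} [LinearOrder α] [PseudoMetricSpace E] {f : α → E} {s : Set α}

lemma BoundedVariationOn.sum_dist_le_of_monotoneOn_Iic (hf : BoundedVariationOn f s) {n : ℕ}
    {u : ℕ → α} (hu : MonotoneOn u (Iic n)) (us : ∀ i ≤ n, u i ∈ s) :
    ∑ i ∈ Finset.range n, dist (f (u (i + 1))) (f (u i)) ≤ (eVariationOn f s).toReal := by
  rw [← ENNReal.ofReal_le_iff_le_toReal hf, ← sum_range_edist_eq_ofReal_sum_dist fun i => f (u i)]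
  exact eVariationOn.sum_le_of_monotoneOn_Iic hu us

lemma BoundedVariationOn.exists_lt_sum_dist (hf : BoundedVariationOn f s) {r : ℝ} (hr0 : 0 ≤ r)
    (hr : r < (eVariationOn f s).toReal) :
    ∃ (m : ℕ) (u : ℕ → α), Monotone u ∧ (∀ i, u i ∈ s) ∧
      r < ∑ i ∈ Finset.range m, dist (f (u (i + 1))) (f (u i)) := by
  have hlt : ENNReal.ofReal r < eVariationOn f s := (ENNReal.ofReal_lt_iff_lt_toReal hr0 hf).2 hr
  obtain ⟨⟨m, u, hu, us⟩, hsum⟩ := lt_iSup_iff.1 hlt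
  refine ⟨m, u, hu, us, ?_⟩
  change ENNReal.ofReal r < ∑ i ∈ Finset.range m, edist ((f ∘ u) (i + 1)) ((f ∘ u) i) at hsum
  rwa [sum_range_edist_eq_ofReal_sum_dist, ENNReal.ofReal_lt_ofReal_iff_of_nonneg hr0] at hsum

end Variation

lemma exists_monotone_index_dist_lt {t : ℕ → ℝ} {N : ℕ} {δ : ℝ} (hδ : 0 < δ)
    (hmesh : ∀ i < N, t (i + 1) - t i < δ) :
    ∃ κ : ℝ → ℕ, Monotone κ ∧ ∀ x ∈ Icc (t 0) (t N), κ x ≤ N ∧ dist x (t (κ x)) < δ := by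
  refine ⟨fun x => Nat.findGreatest (fun i => t i ≤ x) N,
    fun x y hxy => Nat.findGreatest_mono (fun i hi => hi.trans hxy) le_rfl,
    fun x hx => ⟨Nat.findGreatest_le N, ?_⟩⟩
  set k := Nat.findGreatest (fun i => t i ≤ x) N
  have hk : t k ≤ x := Nat.findGreatest_spec (P := fun i => t i ≤ x) (Nat.zero_le N) hx.1
  rw [Real.dist_eq, abs_of_nonneg (sub_nonneg.2 hk)]
  have hkN : k ≤ N := Nat.findGreatest_le N
  rcases hkN.lt_or_eq with hlt | heq
  · have hnext : x < t (k + 1) :=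
      not_le.1 (Nat.findGreatest_is_greatest (Nat.lt_succ_self k) hlt)
    linarith [hmesh k hlt]
  · rw [heq]
    linarith [hx.2]

section Partition

variable {E : Type*} [PseudoMetricSpace E] {f : ℝ → E} {a b : ℝ}

lemma sum_dist_le_sum_dist_partition_add {δ η : ℝ} (hδ : 0 < δ)
    (hf : ∀ x ∈ Icc a b, ∀ y ∈ Icc a b, dist x y < δ → dist (f x) (f y) < η)
    {N : ℕ} {t : ℕ → ℝ} (ht : MonotoneOn t (Iic N)) (ht0 : t 0 = a) (htN : t N = b)
    (hmesh : ∀ i < N, t (i + 1) - t i < δ)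
    {m : ℕ} {u : ℕ → ℝ} (hu : Monotone u) (us : ∀ i, u i ∈ Icc a b) :
    ∑ j ∈ Finset.range m, dist (f (u (j + 1))) (f (u j))
      ≤ ∑ i ∈ Finset.range N, dist (f (t (i + 1))) (f (t i)) + 2 * m * η := by
  subst ht0 htN
  obtain ⟨κ, hκ, hκt⟩ := exists_monotone_index_dist_lt hδ hmesh
  have hsub : Finset.Ico (κ (u 0)) (κ (u m)) ⊆ Finset.range N := fun i hi =>
    Finset.mem_range.2 ((Finset.mem_Ico.1 hi).2.trans_le (hκt _ (us m)).1)
  calc ∑ j ∈ Finset.range m, dist (f (u (j + 1))) (f (u j))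
      ≤ ∑ j ∈ Finset.range m, dist (f (t (κ (u (j + 1))))) (f (t (κ (u j)))) + 2 * m * η :=
        sum_range_dist_le_sum_range_dist_add fun j _ =>
          (hf _ (us j) _ (ht.mem_Icc_of_le (hκt _ (us j)).1) (hκt _ (us j)).2).le
    _ ≤ ∑ i ∈ Finset.Ico (κ (u 0)) (κ (u m)), dist (f (t (i + 1))) (f (t i)) + 2 * m * η := by
        gcongr
        exact sum_range_dist_comp_le_sum_Ico (hκ.comp hu) (f ∘ t) m
    _ ≤ ∑ i ∈ Finset.range N, dist (f (t (i + 1))) (f (t i)) + 2 * m * η := by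
        gcongr

lemma ContinuousOn.exists_pos_lt_sum_dist_partition (hf : ContinuousOn f (Icc a b)) {m : ℕ}
    {u : ℕ → ℝ} (hu : Monotone u) (us : ∀ i, u i ∈ Icc a b) {r : ℝ}
    (hr : r < ∑ j ∈ Finset.range m, dist (f (u (j + 1))) (f (u j))) :
    ∃ δ > 0, ∀ (N : ℕ) (t : ℕ → ℝ), MonotoneOn t (Iic N) → t 0 = a → t N = b →
      (∀ i < N, t (i + 1) - t i < δ) →
        r < ∑ i ∈ Finset.range N, dist (f (t (i + 1))) (f (t i)) := by
  set gap := ∑ j ∈ Finset.range m, dist (f (u (j + 1))) (f (u j)) - r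
  have hgap : 0 < gap := sub_pos.2 hr
  set η := gap / (2 * (m + 1))
  have hη : 2 * m * η < gap := by
    rw [mul_div_assoc', div_lt_iff₀ (by positivity)]
    nlinarith
  obtain ⟨δ, hδ, hfδ⟩ := Metric.uniformContinuousOn_iff.1
    (isCompact_Icc.uniformContinuousOn_of_continuous hf) η (by positivity)
  refine ⟨δ, hδ, fun N t ht ht0 htN hmesh => ?_⟩
  linarith [sum_dist_le_sum_dist_partition_add hδ hfδ ht ht0 htN hmesh (m := m) hu us]

end Partition

/-- Let `f : [a,b] → ℝ` be continuous and of bounded variation, and let `(P_n)` be a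
sequence of partitions of `[a,b]` (partition `P_n` given by points
`a = t n 0 < t n 1 < ⋯ < t n (N n) = b`) whose mesh sizes tend to `0`.
Then `V_{P_n}(f) → V_a^b(f)` as `n → ∞`. -/
theorem variation_tendsto_of_mesh_tendsto_zero
    (a b : ℝ) (f : ℝ → ℝ)
    (hf : ContinuousOn f (Icc a b)) (hbv : BoundedVariationOn f (Icc a b))
    (N : ℕ → ℕ) (t : ℕ → ℕ → ℝ)
    (hN : ∀ n, 1 ≤ N n)
    (h0 : ∀ n, t n 0 = a) (h1 : ∀ n, t n (N n) = b)
    (hmono : ∀ n, ∀ i < N n, t n i < t n (i + 1))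
    (hmesh : Tendsto (fun n => (Finset.range (N n)).sup' (by
        simpa using Finset.nonempty_range_iff.mpr (Nat.one_le_iff_ne_zero.mp (hN n)))
        (fun i => t n (i + 1) - t n i)) atTop (nhds 0)) :
    Tendsto (fun n => ∑ i ∈ Finset.range (N n), |f (t n (i + 1)) - f (t n i)|)
      atTop (nhds (eVariationOn f (Icc a b)).toReal) := by
  have ht : ∀ n, MonotoneOn (t n) (Iic (N n)) := fun n =>
    monotoneOn_of_le_add_one ordConnected_Iic fun i _ _ hi => (hmono n i hi).le
  simp only [← Real.dist_eq]
  refine tendsto_order.2 ⟨fun r hr => ?_, fun r hr => Eventually.of_forall fun n =>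
    (hbv.sum_dist_le_of_monotoneOn_Iic (ht n) fun i hi => by
      simpa only [h0, h1] using (ht n).mem_Icc_of_le hi).trans_lt hr⟩
  rcases lt_or_ge r 0 with hr0 | hr0
  · exact Eventually.of_forall fun n => hr0.trans_le (Finset.sum_nonneg fun _ _ => dist_nonneg)
  obtain ⟨m, u, hu, us, hsum⟩ := hbv.exists_lt_sum_dist hr0 hr
  obtain ⟨δ, hδ, hδsum⟩ := hf.exists_pos_lt_sum_dist_partition hu us hsum
  filter_upwards [hmesh.eventually (gt_mem_nhds hδ)] with n hn
  exact hδsum (N n) (t n) (ht n) (h0 n) (h1 n) fun i hi =>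
    (Finset.sup'_lt_iff _).1 hn i (Finset.mem_range.2 hi)
end

section
/- For the alternating time series X(j) = c₁ (j odd), X(j) = c₂ (j even) with c₁ ≠ c₂, sampled from a function f with f((j-1)/(N-1)) = X(j), the Higuchi length satisfies L(k) = (N-1)|c₁ - c₂| / k² for all odd k with 1 ≤ k ≤ ⌈N/2⌉. -/
/-- For the alternating time series `X(j) = c₁` (`j` odd), `X(j) = c₂` (`j` even)
with `c₁ ≠ c₂`, the Higuchi length `L(k) = (1/k²) ∑_{m=1}^k C_{N,k,m} V_{N,k,m}`
satisfies `L(k) = (N-1)|c₁ - c₂| / k²` for all odd `k` with `1 ≤ k ≤ ⌈N/2⌉`. -/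
theorem higuchi_L_alternating (c₁ c₂ : ℝ) (hc : c₁ ≠ c₂)
    (X : ℕ → ℝ) (hX : ∀ j, X j = if Odd j then c₁ else c₂)
    (N k : ℕ) (hN : 2 ≤ N) (hk1 : 1 ≤ k) (hk2 : k ≤ ⌈(N : ℚ) / 2⌉₊) (hodd : Odd k) :
    (1 / (k : ℝ) ^ 2) * ∑ m ∈ Finset.Icc 1 k,
      (((N : ℝ) - 1) / ((⌈((N : ℚ) - m) / k⌉₊ : ℝ) * k)) *
        (∑ i ∈ Finset.range ⌈((N : ℚ) - m) / k⌉₊,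
          |X (m + (i + 1) * k) - X (m + i * k)|) =
      ((N : ℝ) - 1) * |c₁ - c₂| / (k : ℝ) ^ 2 := by
  have hkQ : (0 : ℚ) < k := by exact_mod_cast hk1
  have hkR : (k : ℝ) ≠ 0 := by positivity
  -- k ≤ N - 1
  have hceil : ⌈(N : ℚ) / 2⌉₊ ≤ N - 1 := by
    rw [Nat.ceil_le]
    have : ((N - 1 : ℕ) : ℚ) = (N : ℚ) - 1 := by
      have : (1:ℕ) ≤ N := by omega
      push_cast [this]; ring
    rw [this]
    have : (2 : ℚ) ≤ N := by exact_mod_cast hN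
    linarith
  have hterm : ∀ m ∈ Finset.Icc 1 k,
      (((N : ℝ) - 1) / ((⌈((N : ℚ) - m) / k⌉₊ : ℝ) * k)) *
        (∑ i ∈ Finset.range ⌈((N : ℚ) - m) / k⌉₊,
          |X (m + (i + 1) * k) - X (m + i * k)|) =
      ((N : ℝ) - 1) * |c₁ - c₂| / k := by
    intro m hm
    simp only [Finset.mem_Icc] at hm
    have hmN : m ≤ N - 1 := le_trans (le_trans hm.2 hk2) hceil
    have hpos : 0 < ⌈((N : ℚ) - m) / k⌉₊ := by
      apply Nat.ceil_pos.mpr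
      apply div_pos _ hkQ
      have : (m : ℚ) ≤ (N : ℚ) - 1 := by
        have : ((m : ℚ)) ≤ ((N - 1 : ℕ) : ℚ) := by exact_mod_cast hmN
        have h1 : ((N - 1 : ℕ) : ℚ) = (N : ℚ) - 1 := by
          have : (1:ℕ) ≤ N := by omega
          push_cast [this]; ring
        linarith [h1 ▸ this]
      linarith
    have habs : ∀ i : ℕ, |X (m + (i + 1) * k) - X (m + i * k)| = |c₁ - c₂| := by
      intro i
      have heq : m + (i + 1) * k = (m + i * k) + k := by ring
      rw [heq, hX, hX]
      have hpar : Odd (m + i * k + k) ↔ ¬ Odd (m + i * k) := by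
        rcases hodd with ⟨t, ht⟩
        rw [Nat.odd_iff, Nat.odd_iff] at *
        omega
      by_cases h : Odd (m + i * k)
      · rw [if_pos h, if_neg (by rw [hpar]; exact fun h' => h' h)]
        exact abs_sub_comm c₂ c₁
      · rw [if_neg h, if_pos (hpar.mpr h)]
    rw [Finset.sum_congr rfl (fun i _ => habs i), Finset.sum_const, nsmul_eq_mul,
      Finset.card_range]
    have hc0 : (⌈((N : ℚ) - m) / k⌉₊ : ℝ) ≠ 0 := Nat.cast_ne_zero.mpr hpos.ne'
    field_simp
  rw [Finset.sum_congr rfl hterm, Finset.sum_const, Nat.card_Icc, nsmul_eq_mul]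
  simp only [Nat.add_sub_cancel]
  field_simp
end
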